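/- Let s be irrational in (0,1) with convergent denominators qₘ and suppose for some m ≥ 1 that ζ_{m+1} ≥ ⌈1/ε⌉ for some ε > 0. Then there exist integers p, q with 1 ≤ q ≤ qₘ and |q·s − p| ≤ ε. Consequently, for the IFS Φ_{s,t} with any irrational t, if 2ⁿ − 1 ≥ qₘ then Δₙ ≤ ε/2ⁿ ≤ ε. -/

import Mathlib

open scoped BigOperators

noncomputable def phiST (s t : ℝ) (i : Fin 6) (x : ℝ) : ℝ :=
  (x + ![0, 1, s, 1 + s, t, 1 + t] i) / 2

noncomputable def compST (s t : ℝ) (l : List (Fin 6)) : ℝ → ℝ :=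
  l.foldr (fun i g => phiST s t i ∘ g) id

noncomputable def DeltaST (s t : ℝ) (n : ℕ) : ℝ :=
  sInf {r : ℝ | ∃ a b : List (Fin 6), a.length = n ∧ b.length = n ∧ a ≠ b ∧
    r = |compST s t a 0 - compST s t b 0|}


/-! The convergent `pₘ / qₘ` of `s` satisfies `|qₘ s - pₘ| ≤ 1 / qₘ₊₁ ≤ 1 / ζₘ₊₁ ≤ ε`, because
`qₘ₊₁ = ζₘ₊₁ qₘ + qₘ₋₁ ≥ ζₘ₊₁`. For the gap bound, words with binary digits in `{0, 1}`
(resp. `{0, s}`) realise every point `P / 2ⁿ` (resp. `Q s / 2ⁿ`) with `P, Q < 2ⁿ` as `φ_α(0)`.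
Since `0 < qₘ s < qₘ`, clamping `pₘ` into `[0, qₘ]` keeps `|qₘ s - P| ≤ ε`, and the two points
`P / 2ⁿ ≠ qₘ s / 2ⁿ` come from distinct words of length `n`. -/

namespace GenContFract

section Integrality

variable {K : Type*} [Field K] [LinearOrder K] [FloorRing K]

theorem exists_int_eq_of_contsAux (v : K) (n : ℕ) :
    ∃ a b : ℤ, (GenContFract.of v).contsAux n = ⟨(a : K), (b : K)⟩ := by
  suffices h : ∀ n, (∃ a b : ℤ, (GenContFract.of v).contsAux n = ⟨(a : K), (b : K)⟩) ∧
      ∃ a b : ℤ, (GenContFract.of v).contsAux (n + 1) = ⟨(a : K), (b : K)⟩ from (h n).1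
  intro n
  induction n with
  | zero => exact ⟨⟨1, 0, by simp [contsAux]⟩, ⌊v⌋, 1, by simp [contsAux, of_h_eq_floor]⟩
  | succ n ih =>
    refine ⟨ih.2, ?_⟩
    obtain ⟨⟨a₀, b₀, h₀⟩, ⟨a₁, b₁, h₁⟩⟩ := ih
    rcases hs : (GenContFract.of v).s.get? n with _ | gp
    · rw [contsAux_stable_step_of_terminated hs]
      exact ⟨a₁, b₁, h₁⟩
    · obtain ⟨hgpa, z, hgpb⟩ := of_partNum_eq_one_and_exists_int_partDen_eq hs
      refine ⟨z * a₁ + a₀, z * b₁ + b₀, ?_⟩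
      rw [contsAux_recurrence hs h₀ h₁, hgpa, hgpb]
      push_cast
      simp only [one_mul]

theorem exists_int_eq_num_and_den (v : K) (n : ℕ) :
    ∃ p q : ℤ, (GenContFract.of v).nums n = p ∧ (GenContFract.of v).dens n = q := by
  obtain ⟨p, q, h⟩ := exists_int_eq_of_contsAux v (n + 1)
  exact ⟨p, q, by rw [num_eq_conts_a, nth_cont_eq_succ_nth_contAux, h],
    by rw [den_eq_conts_b, nth_cont_eq_succ_nth_contAux, h]⟩

end Integrality

variable {K : Type*} [Field K] [LinearOrder K] [IsStrictOrderedRing K] [FloorRing K]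

theorem one_le_of_den (v : K) (n : ℕ) : 1 ≤ (GenContFract.of v).dens n := by
  induction n with
  | zero => exact (zeroth_den_eq_one).ge
  | succ n ih => exact ih.trans of_den_mono

theorem abs_den_mul_sub_num_le {v : K} {n : ℕ} (h : ¬(GenContFract.of v).TerminatedAt n) :
    |(GenContFract.of v).dens n * v - (GenContFract.of v).nums n| ≤
      1 / (GenContFract.of v).dens (n + 1) := by
  set g := GenContFract.of v
  have hden : 0 < g.dens n := zero_lt_one.trans_le (one_le_of_den v n)
  have hdiff : g.dens n * v - g.nums n = g.dens n * (v - g.convs n) := by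
    rw [conv_eq_num_div_den]
    field_simp
  calc |g.dens n * v - g.nums n| = g.dens n * |v - g.convs n| := by
        rw [hdiff, abs_mul, abs_of_pos hden]
    _ ≤ g.dens n * (1 / (g.dens n * g.dens (n + 1))) := by
      gcongr
      exact abs_sub_convs_le h
    _ = 1 / g.dens (n + 1) := by field_simp

theorem of_not_terminatedAt_of_irrational {v : ℝ} (hv : Irrational v) (n : ℕ) :
    ¬(GenContFract.of v).TerminatedAt n := fun h =>
  let ⟨q, hq⟩ := (terminates_iff_rat v).mp ⟨n, h⟩
  hv ⟨q, hq.symm⟩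

end GenContFract

theorem exists_nat_le_abs_sub_le_abs_sub {x : ℝ} {Q : ℕ} (hx : x ∈ Set.Icc (0 : ℝ) Q) (p : ℤ) :
    ∃ P : ℕ, P ≤ Q ∧ |x - P| ≤ |x - p| := by
  obtain ⟨hx0, hxQ⟩ := hx
  rcases le_or_gt p 0 with hp | hp
  · refine ⟨0, Nat.zero_le _, ?_⟩
    have : (p : ℝ) ≤ 0 := by exact_mod_cast hp
    rw [Nat.cast_zero, sub_zero, abs_of_nonneg hx0]
    exact le_abs.mpr (Or.inl (by linarith))
  rcases le_or_gt (Q : ℤ) p with hQp | hpQ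
  · refine ⟨Q, le_rfl, ?_⟩
    have : (Q : ℝ) ≤ p := by exact_mod_cast hQp
    rw [abs_of_nonpos (by linarith)]
    exact neg_le_abs _ |>.trans' (by linarith)
  · lift p to ℕ using hp.le
    exact ⟨p, by omega, le_rfl⟩

section IFS

variable (s t : ℝ)

theorem compST_cons (i : Fin 6) (l : List (Fin 6)) (x : ℝ) :
    compST s t (i :: l) x = phiST s t i (compST s t l x) := rfl

theorem exists_compST_eq_mul_div_two_pow (d : Fin 6) (n k : ℕ) (hk : k < 2 ^ n) :
    ∃ w : List (Fin 6), w.length = n ∧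
      compST s t w 0 = ![0, 1, s, 1 + s, t, 1 + t] d * k / 2 ^ n := by
  induction n generalizing k with
  | zero => exact ⟨[], rfl, by simp [show k = 0 by simpa using hk, compST]⟩
  | succ n ih =>
    obtain ⟨w, hw, hval⟩ := ih (k % 2 ^ n) (Nat.mod_lt _ (by positivity))
    have hb : k / 2 ^ n < 2 := Nat.div_lt_of_lt_mul (by rwa [pow_succ] at hk)
    refine ⟨(if k / 2 ^ n = 0 then 0 else d) :: w, by simp [hw], ?_⟩
    rw [compST_cons, hval, phiST]
    conv_rhs => rw [← Nat.mod_add_div k (2 ^ n)]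
    generalize k / 2 ^ n = b at hb ⊢
    interval_cases b
    · rw [if_pos rfl, Matrix.cons_val_zero]
      push_cast
      field_simp
      ring
    · rw [if_neg one_ne_zero]
      push_cast
      field_simp
      ring

theorem DeltaST_le_abs_sub {n : ℕ} {a b : List (Fin 6)} (ha : a.length = n) (hb : b.length = n)
    (hab : a ≠ b) : DeltaST s t n ≤ |compST s t a 0 - compST s t b 0| :=
  csInf_le ⟨0, by rintro r ⟨-, -, -, -, -, rfl⟩; exact abs_nonneg _⟩ ⟨a, b, ha, hb, hab, rfl⟩

theorem DeltaST_le_abs_mul_sub_div (hs : Irrational s) {n P Q : ℕ} (hP : P < 2 ^ n)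
    (hQ : Q < 2 ^ n) (hQ0 : Q ≠ 0) : DeltaST s t n ≤ |Q * s - P| / 2 ^ n := by
  obtain ⟨a, ha, hav⟩ := exists_compST_eq_mul_div_two_pow s t 2 n Q hQ
  obtain ⟨b, hb, hbv⟩ := exists_compST_eq_mul_div_two_pow s t 1 n P hP
  have hdiff : compST s t a 0 - compST s t b 0 = (Q * s - P) / 2 ^ n := by
    rw [hav, hbv]
    simp only [Matrix.cons_val, Matrix.cons_val_one, Matrix.cons_val_zero]
    ring
  have hne : (Q * s - P) / (2 : ℝ) ^ n ≠ 0 :=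
    div_ne_zero (sub_ne_zero.mpr ((hs.natCast_mul hQ0).ne_nat P)) (by positivity)
  calc DeltaST s t n ≤ |compST s t a 0 - compST s t b 0| :=
        DeltaST_le_abs_sub s t ha hb fun h => hne (by rw [← hdiff, h, sub_self])
    _ = |Q * s - P| / 2 ^ n := by
      rw [hdiff, abs_div, abs_of_pos (by positivity : (0 : ℝ) < 2 ^ n)]

theorem DeltaST_le_of_abs_mul_sub_le (hs : Irrational s) (hs1 : s ∈ Set.Icc (0 : ℝ) 1)
    {n : ℕ} {p q : ℤ} (hq : 1 ≤ q) (hqn : q < 2 ^ n) {ε : ℝ} (h : |q * s - p| ≤ ε) :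
    DeltaST s t n ≤ ε / 2 ^ n := by
  lift q to ℕ using by omega
  have hqn : q < 2 ^ n := by exact_mod_cast hqn
  have hqs : (q : ℝ) * s ∈ Set.Icc (0 : ℝ) q :=
    ⟨by have := hs1.1; positivity, mul_le_of_le_one_right q.cast_nonneg hs1.2⟩
  obtain ⟨P, hPq, hP⟩ := exists_nat_le_abs_sub_le_abs_sub hqs p
  calc DeltaST s t n ≤ |q * s - P| / 2 ^ n :=
        DeltaST_le_abs_mul_sub_div s t hs (by omega) (by omega) (by omega)
    _ ≤ ε / 2 ^ n := by gcongr; exact_mod_cast hP.trans h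

end IFS

theorem stmt17_general (s : ℝ) (hs : Irrational s) (hs1 : s ∈ Set.Ioo (0:ℝ) 1)
    (ζ : ℕ → ℕ)
    (hrec : ∀ m : ℕ, (GenContFract.of s).dens (m + 2) =
      ζ (m + 2) * (GenContFract.of s).dens (m + 1) + (GenContFract.of s).dens m)
    (m : ℕ) (hm : 1 ≤ m) (ε : ℝ) (hε : 0 < ε)
    (hbig : (⌈1 / ε⌉ : ℝ) ≤ ζ (m + 1)) :
    (∃ p q : ℤ, 1 ≤ q ∧ (q : ℝ) ≤ (GenContFract.of s).dens m ∧ |(q : ℝ) * s - p| ≤ ε) ∧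
    (∀ t : ℝ, Irrational t → ∀ n : ℕ, 1 ≤ n →
      (GenContFract.of s).dens m ≤ 2 ^ n - 1 →
      DeltaST s t n ≤ ε / 2 ^ n ∧ ε / 2 ^ n ≤ ε) := by
  obtain ⟨p, q, hp, hq⟩ := GenContFract.exists_int_eq_num_and_den s m
  have hq1 : (1 : ℝ) ≤ q := hq ▸ GenContFract.one_le_of_den s m
  have hζ : (ζ (m + 1) : ℝ) ≤ (GenContFract.of s).dens (m + 1) := by
    obtain ⟨k, rfl⟩ : ∃ k, m = k + 1 := ⟨m - 1, by omega⟩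
    rw [hrec k]
    nlinarith [GenContFract.one_le_of_den s (k + 1), GenContFract.zero_le_of_den (v := s) (n := k),
      (ζ (k + 2)).cast_nonneg (α := ℝ)]
  have happrox : |q * s - p| ≤ ε := by
    rw [← hp, ← hq]
    refine (GenContFract.abs_den_mul_sub_num_le
      (GenContFract.of_not_terminatedAt_of_irrational hs m)).trans ?_
    rw [one_div_le (by linarith [GenContFract.one_le_of_den s (m + 1)]) hε]
    exact (Int.le_ceil _).trans (hbig.trans hζ)
  refine ⟨⟨p, q, by exact_mod_cast hq1, hq.ge, happrox⟩, fun t _ n _ hn => ⟨?_, ?_⟩⟩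
  · have hqn : (q : ℝ) < 2 ^ n := by linarith
    exact DeltaST_le_of_abs_mul_sub_le s t hs (Set.Ioo_subset_Icc_self hs1) (by exact_mod_cast hq1)
      (by exact_mod_cast hqn) happrox
  · exact div_le_self hε.le (one_le_pow₀ one_le_two)

theorem stmt17 (s : ℝ) (hs : Irrational s) (hs1 : s ∈ Set.Ioo (0:ℝ) 1)
    (ζ : ℕ → ℕ) (hζpos : ∀ m, 0 < ζ m)
    (hζ1 : (GenContFract.of s).dens 1 = ζ 1)
    (hrec : ∀ m : ℕ, (GenContFract.of s).dens (m + 2) =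
      ζ (m + 2) * (GenContFract.of s).dens (m + 1) + (GenContFract.of s).dens m)
    (m : ℕ) (hm : 1 ≤ m) (ε : ℝ) (hε : 0 < ε)
    (hbig : (⌈1 / ε⌉ : ℝ) ≤ ζ (m + 1)) :
    (∃ p q : ℤ, 1 ≤ q ∧ (q : ℝ) ≤ (GenContFract.of s).dens m ∧ |(q : ℝ) * s - p| ≤ ε) ∧
    (∀ t : ℝ, Irrational t → ∀ n : ℕ, 1 ≤ n →
      (GenContFract.of s).dens m ≤ 2 ^ n - 1 →
      DeltaST s t n ≤ ε / 2 ^ n ∧ ε / 2 ^ n ≤ ε) :=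
  stmt17_general s hs hs1 ζ hrec m hm ε hε hbig
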